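/- arXiv:2004.05925 — 3 statements merged into one kernel-verified Lean document; each statement's English description precedes it below -/
import Mathlib

section
/- Let P ≥ 1 and let Δ be a symmetric positive definite P × P real matrix. Let w* ∈ ℝ^P be a design (w*_i ≥ 0, Σ_i w*_i = 1) that minimizes the A-criterion Φ_A(w) = tr( (M(w) + Δ⁻¹)⁻¹ ) over all designs, where M(w) = diag(w_1, …, w_P) and M* = M(w*). Then tr( M* (M* + Δ⁻¹)⁻² ) ≥ e_iᵀ (M* + Δ⁻¹)⁻² e_i for all i = 1, …, P, and for every i with w*_i > 0 equality holds: tr( M* (M* + Δ⁻¹)⁻² ) = e_iᵀ (M* + Δ⁻¹)⁻² e_i. -/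
/-!
At a minimizer `w` of `Φ_A` on the simplex, moving towards the vertex `eᵢ` cannot decrease `Φ_A`.
With `A = M(w) + Δ⁻¹` and `D = diag(eᵢ - w)`, the resolvent identity gives the one-sided derivative
`-tr(A⁻¹ D A⁻¹) = tr(M(w) A⁻²) - (A⁻²)ᵢᵢ`, which is therefore nonnegative.
Since `tr(M(w) A⁻²) = ∑ⱼ wⱼ (A⁻²)ⱼⱼ` is a weighted average of the numbers `(A⁻²)ⱼⱼ`, all
bounded by it, it equals each of them that carries positive weight.
-/

open Matrix Set Filter Topology

theorem eq_of_forall_le_of_sum_mul_eq {ι : Type*} [Fintype ι] {w q : ι → ℝ} {T : ℝ}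
    (hw : ∀ j, 0 ≤ w j) (hw1 : ∑ j, w j = 1) (hq : ∀ j, q j ≤ T) (hT : ∑ j, w j * q j = T)
    {i : ι} (hi : 0 < w i) : q i = T := by
  have hsum : ∑ j, w j * (T - q j) = 0 := by
    simp only [mul_sub, Finset.sum_sub_distrib, ← Finset.sum_mul, hw1, one_mul, hT, sub_self]
  have hterm := (Finset.sum_eq_zero_iff_of_nonneg fun j _ =>
    mul_nonneg (hw j) (sub_nonneg.2 (hq j))).1 hsum i (Finset.mem_univ i)
  linarith [(mul_eq_zero.1 hterm).resolve_left hi.ne']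

namespace Matrix

variable {n : Type*} [Fintype n] [DecidableEq n]

theorem trace_diagonal_mul {R : Type*} [NonUnitalNonAssocSemiring R] (d : n → R)
    (Q : Matrix n n R) : (diagonal d * Q).trace = ∑ j, d j * Q j j := by
  simp [trace, diagonal_mul]

theorem trace_inv_add_smul {A D : Matrix n n ℝ} {t : ℝ} (hA : IsUnit A.det)
    (hB : IsUnit (A + t • D).det) :
    (A + t • D)⁻¹.trace = A⁻¹.trace - t * ((A + t • D)⁻¹ * D * A⁻¹).trace := by
  have hres := inv_sub_inv (A := A + t • D) (B := A)
    (by simp only [isUnit_iff_isUnit_det, hA, hB])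
  rw [sub_eq_iff_eq_add', sub_add_cancel_left, Matrix.mul_neg, Matrix.neg_mul, mul_smul_comm,
    smul_mul_assoc] at hres
  rw [congrArg trace hres, trace_add, trace_neg, trace_smul, smul_eq_mul, sub_eq_add_neg]

/-- `-tr (A⁻¹ * D * A⁻¹)` is the derivative of `t ↦ tr (A + t • D)⁻¹` at `0`. -/
theorem trace_inv_mul_inv_nonpos_of_eventually_le {A D : Matrix n n ℝ} (hA : IsUnit A.det)
    (hmin : ∀ᶠ t in 𝓝[>] (0 : ℝ), A⁻¹.trace ≤ (A + t • D)⁻¹.trace) :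
    (A⁻¹ * D * A⁻¹).trace ≤ 0 := by
  have hline : Continuous fun t : ℝ => A + t • D := by fun_prop
  have hdet : ∀ᶠ t in 𝓝 (0 : ℝ), IsUnit (A + t • D).det := by
    have hcont : ContinuousAt (fun t : ℝ => (A + t • D).det) 0 :=
      hline.matrix_det.continuousAt
    filter_upwards [hcont.eventually_ne (by simpa using hA.ne_zero)] with t ht
    exact ht.isUnit
  have hinv : ContinuousAt (fun t : ℝ => (A + t • D)⁻¹) 0 := by
    refine ContinuousAt.comp (g := Inv.inv) ?_ hline.continuousAt
    refine continuousAt_matrix_inv _ ?_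
    rw [Ring.inverse_eq_inv']
    exact continuousAt_inv₀ (by simpa using hA.ne_zero)
  have hlim : Tendsto (fun t : ℝ => ((A + t • D)⁻¹ * D * A⁻¹).trace) (𝓝[>] 0)
      (𝓝 (A⁻¹ * D * A⁻¹).trace) := by
    have hcont := ((continuous_id.matrix_mul continuous_const).matrix_mul
      continuous_const).matrix_trace.continuousAt.comp (g := fun M => (M * D * A⁻¹).trace) hinv
    simpa only [Function.comp_def, zero_smul, add_zero] using hcont.continuousWithinAt.tendsto
  refine le_of_tendsto hlim ?_
  filter_upwards [hmin, nhdsWithin_le_nhds hdet, self_mem_nhdsWithin] with t hle ht (htpos : 0 < t)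
  rw [trace_inv_add_smul hA ht] at hle
  nlinarith

theorem inv_mul_inv_apply_le_of_isMinOn {C : Matrix n n ℝ} {w : n → ℝ}
    (hw : w ∈ stdSimplex ℝ n) (hA : IsUnit (diagonal w + C).det)
    (hmin : IsMinOn (fun v => (diagonal v + C)⁻¹.trace) (stdSimplex ℝ n) w) (i : n) :
    ((diagonal w + C)⁻¹ * (diagonal w + C)⁻¹) i i ≤
      ∑ j, w j * ((diagonal w + C)⁻¹ * (diagonal w + C)⁻¹) j j := by
  set A := diagonal w + C
  have hline : ∀ t : ℝ, diagonal (w + t • (Pi.single i 1 - w)) + C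
      = A + t • diagonal (Pi.single i 1 - w) := by
    intro t
    rw [← diagonal_smul, add_right_comm, diagonal_add]
    rfl
  have hdir : ∀ᶠ t in 𝓝[>] (0 : ℝ), A⁻¹.trace ≤ (A + t • diagonal (Pi.single i 1 - w))⁻¹.trace := by
    filter_upwards [Ioc_mem_nhdsGT zero_lt_one] with t ht
    rw [← hline]
    exact hmin ((convex_stdSimplex ℝ n).add_smul_sub_mem hw (single_mem_stdSimplex ℝ i)
      (Ioc_subset_Icc_self ht))
  have hderiv := trace_inv_mul_inv_nonpos_of_eventually_le hA hdir
  rw [trace_mul_cycle, trace_mul_cycle, Matrix.mul_assoc (diagonal _), trace_diagonal_mul] at hderiv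
  simpa [sub_mul, Finset.sum_sub_distrib, Pi.single_apply] using hderiv

end Matrix

theorem stmt_3_general (P : ℕ)
    (Δ : Matrix (Fin P) (Fin P) ℝ) (hΔ : Δ.PosDef)
    (w : Fin P → ℝ) (hw : ∀ i, 0 ≤ w i) (hw1 : ∑ i, w i = 1)
    (hmin : ∀ v : Fin P → ℝ, (∀ i, 0 ≤ v i) → ∑ i, v i = 1 →
      ((Matrix.diagonal w + Δ⁻¹)⁻¹).trace ≤ ((Matrix.diagonal v + Δ⁻¹)⁻¹).trace) :
    (∀ i : Fin P,
      (Matrix.diagonal w * (Matrix.diagonal w + Δ⁻¹)⁻¹ * (Matrix.diagonal w + Δ⁻¹)⁻¹).trace ≥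
        ((Matrix.diagonal w + Δ⁻¹)⁻¹ * (Matrix.diagonal w + Δ⁻¹)⁻¹) i i) ∧
    (∀ i : Fin P, 0 < w i →
      (Matrix.diagonal w * (Matrix.diagonal w + Δ⁻¹)⁻¹ * (Matrix.diagonal w + Δ⁻¹)⁻¹).trace =
        ((Matrix.diagonal w + Δ⁻¹)⁻¹ * (Matrix.diagonal w + Δ⁻¹)⁻¹) i i) := by
  have hA : IsUnit (diagonal w + Δ⁻¹).det :=
    (isUnit_iff_isUnit_det _).1 (hΔ.inv.posSemidef_add (PosSemidef.diagonal hw)).isUnit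
  have hweighted := trace_diagonal_mul w ((diagonal w + Δ⁻¹)⁻¹ * (diagonal w + Δ⁻¹)⁻¹)
  rw [← Matrix.mul_assoc] at hweighted
  have hle := inv_mul_inv_apply_le_of_isMinOn ⟨hw, hw1⟩ hA (fun v hv => hmin v hv.1 hv.2)
  rw [hweighted]
  exact ⟨hle, fun i hi => (eq_of_forall_le_of_sum_mul_eq hw hw1 hle rfl hi).symm⟩

/-- Necessity part of the equivalence theorem for the A-criterion:
    if the design `w` minimizes `Φ_A(v) = tr((M(v) + Δ⁻¹)⁻¹)` over all designs, then
    `tr(M(w)(M(w)+Δ⁻¹)⁻²) ≥ eᵢᵀ (M(w)+Δ⁻¹)⁻² eᵢ` for all `i`, with equality whenever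
    `wᵢ > 0`. -/
theorem stmt_3 (P : ℕ) (hP : 1 ≤ P)
    (Δ : Matrix (Fin P) (Fin P) ℝ) (hΔ : Δ.PosDef)
    (w : Fin P → ℝ) (hw : ∀ i, 0 ≤ w i) (hw1 : ∑ i, w i = 1)
    (hmin : ∀ v : Fin P → ℝ, (∀ i, 0 ≤ v i) → ∑ i, v i = 1 →
      ((Matrix.diagonal w + Δ⁻¹)⁻¹).trace ≤ ((Matrix.diagonal v + Δ⁻¹)⁻¹).trace) :
    (∀ i : Fin P,
      (Matrix.diagonal w * (Matrix.diagonal w + Δ⁻¹)⁻¹ * (Matrix.diagonal w + Δ⁻¹)⁻¹).trace ≥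
        ((Matrix.diagonal w + Δ⁻¹)⁻¹ * (Matrix.diagonal w + Δ⁻¹)⁻¹) i i) ∧
    (∀ i : Fin P, 0 < w i →
      (Matrix.diagonal w * (Matrix.diagonal w + Δ⁻¹)⁻¹ * (Matrix.diagonal w + Δ⁻¹)⁻¹).trace =
        ((Matrix.diagonal w + Δ⁻¹)⁻¹ * (Matrix.diagonal w + Δ⁻¹)⁻¹) i i) :=
  stmt_3_general P Δ hΔ w hw hw1 hmin
end

section
/- Let P ≥ 1, let Δ be a symmetric positive definite P × P real matrix, and let L = diag(ℓ_1, …, ℓ_P) with ℓ_i ≥ 0. Let w* be a design (w*_i ≥ 0, Σ_i w*_i = 1) that minimizes the weighted A-criterion Φ_{A_w}(w) = tr( L (M(w) + Δ⁻¹)⁻¹ ) over all designs, where M(w) = diag(w_1, …, w_P) and M* = M(w*). Then tr( M* (M* + Δ⁻¹)⁻¹ L (M* + Δ⁻¹)⁻¹ ) ≥ e_iᵀ (M* + Δ⁻¹)⁻¹ L (M* + Δ⁻¹)⁻¹ e_i for all i = 1, …, P, and equality holds for every i with w*_i > 0. -/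
/-!
At a minimiser `w` of the function `Φ(v) = tr(L (M(v) + Δ⁻¹)⁻¹)` on the simplex,
the one-sided derivative of `Φ` along the segment from `w` towards each vertex `eᵢ` is
nonnegative. Since `d/dt (A + tC)⁻¹ = -A⁻¹ C A⁻¹`, that derivative is
`tr(M(w) A⁻¹ L A⁻¹) - (A⁻¹ L A⁻¹)ᵢᵢ` with `A = M(w) + Δ⁻¹`, which gives the inequality.
The `w`-weighted average of the right-hand sides `(A⁻¹ L A⁻¹)ᵢᵢ` is `tr(M(w) A⁻¹ L A⁻¹)` itself,
so every inequality with `wᵢ > 0` must be an equality.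
-/

open Matrix

namespace Matrix

variable {n : Type*} [Fintype n] [DecidableEq n]

theorem trace_diagonal_mul_s8 (w : n → ℝ) (X : Matrix n n ℝ) :
    (diagonal w * X).trace = ∑ i, w i * X i i := by
  simp [trace, diagonal_mul]

section
-- `Matrix` has no global norm; any norm gives the product topology, and the operator norm makes
-- it a complete normed algebra, as `hasFDerivAt_ringInverse` needs.
attribute [local instance] Matrix.linftyOpNormedRing Matrix.linftyOpNormedAlgebra

theorem hasDerivAt_trace_mul_inv_add_smul (L A C : Matrix n n ℝ) (hA : IsUnit A.det) :
    HasDerivAt (fun t : ℝ => (L * (A + t • C)⁻¹).trace) (-(L * A⁻¹ * C * A⁻¹).trace) 0 := by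
  obtain ⟨u, rfl⟩ := (isUnit_iff_isUnit_det A).mpr hA
  have hinv := (hasFDerivAt_ringInverse (𝕜 := ℝ) u).comp_hasDerivAt_of_eq (0 : ℝ)
    (((hasDerivAt_id (0 : ℝ)).smul_const C).const_add (u : Matrix n n ℝ)) (by simp)
  let T : Matrix n n ℝ →L[ℝ] ℝ :=
    ((traceLinearMap n ℝ ℝ).comp (LinearMap.mulLeft ℝ L)).toContinuousLinearMap
  have htrace := T.hasFDerivAt.comp_hasDerivAt (0 : ℝ) hinv
  simp only [Function.comp_def, id, one_smul, _root_.neg_apply,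
    ContinuousLinearMap.mulLeftRight_apply, ← Ring.inverse_unit,
    ← nonsing_inv_eq_ringInverse] at htrace
  refine htrace.congr_deriv ?_
  change (L * -(_ * C * _)).trace = _
  simp [Matrix.mul_assoc]

end

end Matrix

theorem eq_of_sum_mul_eq_of_forall_le {ι : Type*} [Fintype ι] {w x : ι → ℝ} {c : ℝ}
    (hw : ∀ i, 0 ≤ w i) (hw1 : ∑ i, w i = 1) (hx : ∀ i, x i ≤ c)
    (hsum : ∑ i, w i * x i = c) {i : ι} (hi : 0 < w i) : x i = c := by
  have hgap : ∑ j, w j * (c - x j) = 0 := by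
    simp only [mul_sub, Finset.sum_sub_distrib, ← Finset.sum_mul, hw1, one_mul, hsum, sub_self]
  have hterm := (Finset.sum_eq_zero_iff_of_nonneg fun j _ => mul_nonneg (hw j)
    (sub_nonneg.mpr (hx j))).mp hgap i (Finset.mem_univ i)
  linarith [(mul_eq_zero.mp hterm).resolve_left hi.ne']

section WeightedACriterion

variable {n : Type*} [Fintype n] [DecidableEq n]

noncomputable def weightedACriterion (L B : Matrix n n ℝ) (v : n → ℝ) : ℝ :=
  (L * (diagonal v + B)⁻¹).trace

theorem diag_le_trace_of_isMinOn_weightedACriterion {L B : Matrix n n ℝ} {w : n → ℝ}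
    (hw : w ∈ stdSimplex ℝ n) (hA : IsUnit (diagonal w + B).det)
    (hmin : IsMinOn (weightedACriterion L B) (stdSimplex ℝ n) w) (i : n) :
    ((diagonal w + B)⁻¹ * L * (diagonal w + B)⁻¹) i i ≤
      (diagonal w * (diagonal w + B)⁻¹ * L * (diagonal w + B)⁻¹).trace := by
  set A := diagonal w + B
  set C : Matrix n n ℝ := diagonal (Pi.single i 1 - w)
  have hline (t : ℝ) : A + t • C = diagonal (w + t • (Pi.single i 1 - w)) + B := by
    rw [add_right_comm, ← diagonal_smul, diagonal_add]
    rfl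
  have hloc : IsLocalMinOn (fun t : ℝ => (L * (A + t • C)⁻¹).trace) (Set.Icc 0 1) 0 := by
    refine IsMinOn.localize fun t ht => ?_
    rw [Set.mem_ofPred_eq, zero_smul, add_zero, hline]
    exact hmin ((convex_stdSimplex ℝ n).add_smul_sub_mem hw (single_mem_stdSimplex ℝ i) ht)
  have hderiv := hloc.hasFDerivWithinAt_nonneg
    (Matrix.hasDerivAt_trace_mul_inv_add_smul L A C hA).hasFDerivAt.hasFDerivWithinAt
    (y := 1) (mem_posTangentConeAt_of_segment_subset (by simp [segment_eq_Icc]))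
  have hsplit : -(L * A⁻¹ * C * A⁻¹).trace =
      (diagonal w * A⁻¹ * L * A⁻¹).trace - (A⁻¹ * L * A⁻¹) i i := by
    have hsingle : (L * A⁻¹ * single i i 1 * A⁻¹).trace = (A⁻¹ * L * A⁻¹) i i := by
      rw [trace_mul_cycle, ← Matrix.mul_assoc, trace_mul_single]
      simp
    have hdiag : (L * A⁻¹ * diagonal w * A⁻¹).trace = (diagonal w * A⁻¹ * L * A⁻¹).trace := by
      rw [Matrix.mul_assoc, trace_mul_comm]
      simp only [Matrix.mul_assoc]
    have hC : C = single i i 1 - diagonal w := by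
      rw [← diagonal_single, diagonal_sub]
      rfl
    rw [hC, Matrix.mul_sub, Matrix.sub_mul, trace_sub, hsingle, hdiag]
    ring
  simpa [hsplit] using hderiv

end WeightedACriterion

theorem stmt_8_general (P : ℕ)
    (Δ : Matrix (Fin P) (Fin P) ℝ) (hΔ : Δ.PosDef)
    (ℓ : Fin P → ℝ)
    (w : Fin P → ℝ) (hw : ∀ i, 0 ≤ w i) (hw1 : ∑ i, w i = 1)
    (hmin : ∀ v : Fin P → ℝ, (∀ i, 0 ≤ v i) → ∑ i, v i = 1 →
      (Matrix.diagonal ℓ * (Matrix.diagonal w + Δ⁻¹)⁻¹).trace ≤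
        (Matrix.diagonal ℓ * (Matrix.diagonal v + Δ⁻¹)⁻¹).trace) :
    (∀ i : Fin P,
      (Matrix.diagonal w * (Matrix.diagonal w + Δ⁻¹)⁻¹ * Matrix.diagonal ℓ *
          (Matrix.diagonal w + Δ⁻¹)⁻¹).trace ≥
        ((Matrix.diagonal w + Δ⁻¹)⁻¹ * Matrix.diagonal ℓ * (Matrix.diagonal w + Δ⁻¹)⁻¹) i i) ∧
    (∀ i : Fin P, 0 < w i →
      (Matrix.diagonal w * (Matrix.diagonal w + Δ⁻¹)⁻¹ * Matrix.diagonal ℓ *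
          (Matrix.diagonal w + Δ⁻¹)⁻¹).trace =
        ((Matrix.diagonal w + Δ⁻¹)⁻¹ * Matrix.diagonal ℓ * (Matrix.diagonal w + Δ⁻¹)⁻¹) i i) := by
  have hA : (diagonal w + Δ⁻¹).PosDef :=
    PosDef.posSemidef_add (posSemidef_diagonal_iff.mpr fun i => by exact_mod_cast hw i) hΔ.inv
  have hle := diag_le_trace_of_isMinOn_weightedACriterion ⟨hw, hw1⟩ hA.det_pos.ne'.isUnit
    (fun v hv => hmin v hv.1 hv.2)
  refine ⟨hle, fun i hi => (eq_of_sum_mul_eq_of_forall_le hw hw1 hle ?_ hi).symm⟩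
  simp only [Matrix.mul_assoc, trace_diagonal_mul_s8]

/-- Necessity part of the equivalence theorem for the weighted A-criterion
    `Φ_{A_w}(v) = tr(L (M(v) + Δ⁻¹)⁻¹)` with `L = diag(ℓ₁,…,ℓ_P)`, `ℓᵢ ≥ 0`: if `w`
    minimizes the weighted A-criterion over all designs, then
    `tr(M(w)(M(w)+Δ⁻¹)⁻¹ L (M(w)+Δ⁻¹)⁻¹) ≥ eᵢᵀ (M(w)+Δ⁻¹)⁻¹ L (M(w)+Δ⁻¹)⁻¹ eᵢ`
    for all `i`, with equality whenever `wᵢ > 0`. -/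
theorem stmt_8 (P : ℕ) (hP : 1 ≤ P)
    (Δ : Matrix (Fin P) (Fin P) ℝ) (hΔ : Δ.PosDef)
    (ℓ : Fin P → ℝ) (hℓ : ∀ i, 0 ≤ ℓ i)
    (w : Fin P → ℝ) (hw : ∀ i, 0 ≤ w i) (hw1 : ∑ i, w i = 1)
    (hmin : ∀ v : Fin P → ℝ, (∀ i, 0 ≤ v i) → ∑ i, v i = 1 →
      (Matrix.diagonal ℓ * (Matrix.diagonal w + Δ⁻¹)⁻¹).trace ≤
        (Matrix.diagonal ℓ * (Matrix.diagonal v + Δ⁻¹)⁻¹).trace) :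
    (∀ i : Fin P,
      (Matrix.diagonal w * (Matrix.diagonal w + Δ⁻¹)⁻¹ * Matrix.diagonal ℓ *
          (Matrix.diagonal w + Δ⁻¹)⁻¹).trace ≥
        ((Matrix.diagonal w + Δ⁻¹)⁻¹ * Matrix.diagonal ℓ * (Matrix.diagonal w + Δ⁻¹)⁻¹) i i) ∧
    (∀ i : Fin P, 0 < w i →
      (Matrix.diagonal w * (Matrix.diagonal w + Δ⁻¹)⁻¹ * Matrix.diagonal ℓ *
          (Matrix.diagonal w + Δ⁻¹)⁻¹).trace =
        ((Matrix.diagonal w + Δ⁻¹)⁻¹ * Matrix.diagonal ℓ * (Matrix.diagonal w + Δ⁻¹)⁻¹) i i) :=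
  stmt_8_general P Δ hΔ ℓ w hw hw1 hmin
end

section
/- Let P ≥ 1 and let Δ be a diagonal P × P real matrix with strictly positive diagonal entries. Let w̃ be a design (w̃_i ≥ 0, Σ_i w̃_i = 1) with w̃_i > 0 for all i = 1, …, P, that minimizes the A-criterion Φ_A(w) = tr( (M(w) + Δ⁻¹)⁻¹ ) over all designs w, where M(w) = diag(w_1, …, w_P). Then w̃ satisfies the equal-efficiency condition: e_iᵀ (M(w̃) + Δ⁻¹)⁻¹ e_i = e_{i'}ᵀ (M(w̃) + Δ⁻¹)⁻¹ e_{i'} for all i, i' = 1, …, P. -/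
/-!
With `Δ` diagonal, `(M(w) + Δ⁻¹)⁻¹ = diag((w_i + 1/d_i)⁻¹)`, so `Φ_A(w) = ∑ (w_i + 1/d_i)⁻¹`.
If `w_i + 1/d_i < w_j + 1/d_j` with `w_j > 0`, moving a little weight from `j` to `i` keeps the
design feasible and raises the product `(w_i + 1/d_i)(w_j + 1/d_j)` while keeping the sum of the
two factors, which strictly lowers `Φ_A`. At an interior minimizer all `w_i + 1/d_i` thus agree.
-/

open Matrix Finset

lemma inv_add_inv_lt_of_transfer {a b ε : ℝ} (ha : 0 < a) (hε : 0 < ε) (hεb : ε < b - a) :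
    (a + ε)⁻¹ + (b - ε)⁻¹ < a⁻¹ + b⁻¹ := by
  have hb : 0 < b := by linarith
  have hbε : 0 < b - ε := by linarith
  rw [inv_add_inv (by positivity) hbε.ne', inv_add_inv ha.ne' hb.ne', add_add_sub_cancel]
  exact div_lt_div_of_pos_left (by positivity) (by positivity) (by nlinarith)

variable {ι : Type*} [Fintype ι] [DecidableEq ι]

lemma inv_diagonal_of_ne_zero {K : Type*} [Field K] {v : ι → K} (hv : ∀ k, v k ≠ 0) :
    (diagonal v)⁻¹ = diagonal fun k => (v k)⁻¹ :=
  inv_eq_right_inv <| by simp only [diagonal_mul_diagonal, mul_inv_cancel₀ (hv _), diagonal_one]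

lemma inv_diagonal_add_inv_diagonal {w d : ι → ℝ} (hw : ∀ k, 0 ≤ w k) (hd : ∀ k, 0 < d k) :
    (diagonal w + (diagonal d)⁻¹)⁻¹ = diagonal fun k => (w k + (d k)⁻¹)⁻¹ := by
  rw [inv_diagonal_of_ne_zero fun k => (hd k).ne', diagonal_add,
    inv_diagonal_of_ne_zero fun k => (add_pos_of_nonneg_of_pos (hw k) (inv_pos.mpr (hd k))).ne']

lemma sum_inv_add_single_sub_single_lt (a : ι → ℝ) {i j : ι} (hij : i ≠ j) (hai : 0 < a i)
    {ε : ℝ} (hε : 0 < ε) (hεa : ε < a j - a i) :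
    ∑ k, (a k + (Pi.single i ε - Pi.single j ε : ι → ℝ) k)⁻¹ < ∑ k, (a k)⁻¹ := by
  rw [← sub_neg, ← sum_sub_distrib, Fintype.sum_eq_add i j hij]
  · simp only [Pi.sub_apply, Pi.single_eq_same, Pi.single_eq_of_ne hij, Pi.single_eq_of_ne' hij,
      sub_zero, zero_sub, ← sub_eq_add_neg]
    linarith [inv_add_inv_lt_of_transfer hai hε hεa]
  · rintro k ⟨hki, hkj⟩
    simp [Pi.single_eq_of_ne hki, Pi.single_eq_of_ne hkj]

lemma add_single_sub_single_mem_stdSimplex {w : ι → ℝ} (hw : w ∈ stdSimplex ℝ ι) {i j : ι}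
    (hij : i ≠ j) {ε : ℝ} (hε : 0 ≤ ε) (hεj : ε ≤ w j) :
    w + (Pi.single i ε - Pi.single j ε) ∈ stdSimplex ℝ ι := by
  refine ⟨fun k => ?_, by simp [sum_add_distrib, hw.2]⟩
  rcases eq_or_ne k j with rfl | hkj
  · simpa [Pi.single_eq_of_ne' hij] using hεj
  · have hsingle : 0 ≤ (Pi.single i ε : ι → ℝ) k := by
      rw [Pi.single_apply]; split_ifs <;> simp [hε]
    simpa [Pi.single_eq_of_ne hkj] using add_nonneg (hw.1 k) hsingle

lemma add_le_add_of_isMinOn_sum_inv {c w : ι → ℝ} (hc : ∀ k, 0 < c k)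
    (hmin : IsMinOn (fun v => ∑ k, (v k + c k)⁻¹) (stdSimplex ℝ ι) w) (hw : w ∈ stdSimplex ℝ ι)
    {j : ι} (hj : 0 < w j) (i : ι) : w j + c j ≤ w i + c i := by
  by_contra! hlt
  have hij : i ≠ j := by rintro rfl; exact lt_irrefl _ hlt
  set ε := min ((w j + c j - (w i + c i)) / 2) (w j)
  have hε : 0 < ε := lt_min (by linarith) hj
  have hupper := isMinOn_iff.mp hmin _
    (add_single_sub_single_mem_stdSimplex hw hij hε.le (min_le_right _ _))
  have hlower := sum_inv_add_single_sub_single_lt (w + c) hij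
    (by simp only [Pi.add_apply]; linarith [hw.1 i, hc i]) hε
    (lt_of_le_of_lt (min_le_left _ _) (by simp only [Pi.add_apply]; linarith))
  simp only [Pi.add_apply, add_right_comm _ (c _)] at hupper hlower
  linarith

theorem stmt_12_general (P : ℕ)
    (d : Fin P → ℝ) (hd : ∀ i, 0 < d i)
    (Δ : Matrix (Fin P) (Fin P) ℝ) (hΔ : Δ = Matrix.diagonal d)
    (w : Fin P → ℝ) (hw : ∀ i, 0 ≤ w i) (hw1 : ∑ i, w i = 1)
    (hpos : ∀ i, 0 < w i)
    (hmin : ∀ v : Fin P → ℝ, (∀ i, 0 ≤ v i) → ∑ i, v i = 1 →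
      ((Matrix.diagonal w + Δ⁻¹)⁻¹).trace ≤ ((Matrix.diagonal v + Δ⁻¹)⁻¹).trace) :
    ∀ i i' : Fin P,
      ((Matrix.diagonal w + Δ⁻¹)⁻¹) i i = ((Matrix.diagonal w + Δ⁻¹)⁻¹) i' i' := by
  subst hΔ
  have hmin' : IsMinOn (fun v => ∑ k, (v k + (d k)⁻¹)⁻¹) (stdSimplex ℝ (Fin P)) w :=
    isMinOn_iff.mpr fun v hv => by
      simpa only [inv_diagonal_add_inv_diagonal hw hd, inv_diagonal_add_inv_diagonal hv.1 hd,
        trace_diagonal] using hmin v hv.1 hv.2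
  have hc : ∀ k, 0 < (d k)⁻¹ := fun k => inv_pos.mpr (hd k)
  intro i i'
  simp only [inv_diagonal_add_inv_diagonal hw hd, diagonal_apply_eq]
  rw [le_antisymm (add_le_add_of_isMinOn_sum_inv hc hmin' ⟨hw, hw1⟩ (hpos i) i')
    (add_le_add_of_isMinOn_sum_inv hc hmin' ⟨hw, hw1⟩ (hpos i') i)]

/-- if `Δ` is diagonal with strictly positive diagonal entries and the design
    `w̃`, with all weights strictly positive, minimizes the A-criterion
    `Φ_A(v) = tr((M(v)+Δ⁻¹)⁻¹)` over all designs, then `w̃` satisfies the equal-efficiency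
    condition: all diagonal entries of `(M(w̃)+Δ⁻¹)⁻¹` are equal. -/
theorem stmt_12 (P : ℕ) (hP : 1 ≤ P)
    (d : Fin P → ℝ) (hd : ∀ i, 0 < d i)
    (Δ : Matrix (Fin P) (Fin P) ℝ) (hΔ : Δ = Matrix.diagonal d)
    (w : Fin P → ℝ) (hw : ∀ i, 0 ≤ w i) (hw1 : ∑ i, w i = 1)
    (hpos : ∀ i, 0 < w i)
    (hmin : ∀ v : Fin P → ℝ, (∀ i, 0 ≤ v i) → ∑ i, v i = 1 →
      ((Matrix.diagonal w + Δ⁻¹)⁻¹).trace ≤ ((Matrix.diagonal v + Δ⁻¹)⁻¹).trace) :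
    ∀ i i' : Fin P,
      ((Matrix.diagonal w + Δ⁻¹)⁻¹) i i = ((Matrix.diagonal w + Δ⁻¹)⁻¹) i' i' :=
  stmt_12_general P d hd Δ hΔ w hw hw1 hpos hmin
end
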